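/- In the impossibility construction (Z = B = {0,1,2}, classification loss, Q i.i.d. with mode 1, P as above), the Q-optimal learner predicts B_t = 1 for all t, the P-optimal comparator predicts B*_1 = 1 and for t ≥ 2 predicts 2 if Z_1 = 0 and 1 otherwise; consequently, the average per-round regret equals (T−1)/T when Z_1 = 0 and equals 0 when Z_1 ≠ 0. In particular, P(Δ ≥ (T−1)/T) = φ. -/

import Mathlib

/-!
Under zero-one loss the Bayes act of a one-step law is its mode. The mode of `q` is `1`, and after
`Z₁ = 0` the conditional law of `P` is the point mass at `2`, so the two learners can disagree only
at rounds `t ≥ 2` after `Z₁ = 0`. The only such sequence in the support of `P` is `(0, 2, …, 2)`,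
of mass `φ`, on which the `Q`-learner errs in every round but the first and the comparator in none
of them.
-/

open scoped Classical

section BayesAct

variable {α : Type*} [Fintype α] [DecidableEq α]

def IsBayesAct (p : α → ℝ) (b : α) : Prop :=
  ∀ b', ∑ z, p z * (if b = z then (0 : ℝ) else 1) ≤ ∑ z, p z * (if b' = z then (0 : ℝ) else 1)

theorem sum_mul_zeroOneLoss (p : α → ℝ) (b : α) :
    ∑ z, p z * (if b = z then (0 : ℝ) else 1) = ∑ z, p z - p b := by
  simp [mul_ite, Finset.sum_ite, Finset.filter_ne]

theorem IsBayesAct.eq_of_forall_lt {p : α → ℝ} {b m : α} (hb : IsBayesAct p b)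
    (hm : ∀ a ≠ m, p a < p m) : b = m := by
  by_contra hne
  have := hb m
  rw [sum_mul_zeroOneLoss, sum_mul_zeroOneLoss] at this
  linarith [hm b hne]

end BayesAct

theorem sum_ite_eq_zero_one {α : Type*} [Fintype α] [DecidableEq α] (i : α) :
    ∑ t, (if t = i then (0 : ℝ) else 1) = Fintype.card α - 1 := by
  simp [Finset.sum_ite, Finset.filter_ne', Nat.cast_sub (Fintype.card_pos_iff.2 ⟨i⟩)]

theorem apply_lt_apply_one {φ ψ : ℝ} (hφ : φ ∈ Set.Ioo (0 : ℝ) (1 / 2))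
    (hψ : ψ ∈ Set.Ioo (0 : ℝ) (1 / 2 - φ)) {q : Fin 3 → ℝ}
    (hq : ∀ z, q z = if z = 0 then φ else if z = 1 then 1 - φ - ψ else ψ) :
    ∀ a ≠ 1, q a < q 1 := by
  obtain ⟨⟨hφ0, -⟩, ⟨hψ0, hψ⟩⟩ := And.intro hφ hψ
  intro a ha
  fin_cases a <;> simp_all <;> linarith

theorem bayesAct_eq_of_kernel {T : ℕ} {q : Fin 3 → ℝ} (hmode : ∀ a ≠ 1, q a < q 1)
    {κ : (t : Fin T) → (Fin t.val → Fin 3) → Fin 3 → ℝ}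
    (hκ : ∀ (t : Fin T) (pfx : Fin t.val → Fin 3) (z : Fin 3),
      κ t pfx z = if h : t.val ≠ 0 then
        (if pfx ⟨0, Nat.pos_of_ne_zero h⟩ = 0 then (if z = 2 then 1 else 0) else q z)
      else q z)
    {bP : (t : Fin T) → (Fin t.val → Fin 3) → Fin 3}
    (hbP : ∀ t pfx, IsBayesAct (κ t pfx) (bP t pfx)) (t : Fin T) (pfx : Fin t.val → Fin 3) :
    bP t pfx = if h : t.val ≠ 0 then (if pfx ⟨0, Nat.pos_of_ne_zero h⟩ = 0 then 2 else 1) else 1 := by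
  have hκt := hκ t pfx
  split_ifs at hκt ⊢
  · exact (hbP t pfx).eq_of_forall_lt fun a ha => by simp [hκt, ha]
  all_goals exact (hbP t pfx).eq_of_forall_lt fun a ha => by simpa [hκt] using hmode a ha

def zeroThenTwos {T : ℕ} (h0 : 0 < T) : Fin T → Fin 3 :=
  fun t => if t = ⟨0, h0⟩ then 0 else 2

theorem eq_zeroThenTwos_iff {T : ℕ} (h0 : 0 < T) (x : Fin T → Fin 3) :
    x = zeroThenTwos h0 ↔ x ⟨0, h0⟩ = 0 ∧ ∀ t, t ≠ ⟨0, h0⟩ → x t = 2 := by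
  constructor
  · rintro rfl
    exact ⟨by simp [zeroThenTwos], fun t ht => by simp [zeroThenTwos, ht]⟩
  · rintro ⟨hx, htail⟩
    funext t
    by_cases ht : t = ⟨0, h0⟩
    · simp [zeroThenTwos, ht, hx]
    · simp [zeroThenTwos, ht, htail t ht]

section Regret

variable {T : ℕ} {bQ bP : (t : Fin T) → (Fin t.val → Fin 3) → Fin 3}

theorem avgRegret_eq_zero_of_ne_zero (hbQ : ∀ t pfx, bQ t pfx = 1)
    (hbP : ∀ (t : Fin T) (pfx : Fin t.val → Fin 3), bP t pfx =
      if h : t.val ≠ 0 then (if pfx ⟨0, Nat.pos_of_ne_zero h⟩ = 0 then 2 else 1) else 1)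
    {x : Fin T → Fin 3} (h0 : 0 < T) (hx : x ⟨0, h0⟩ ≠ 0) :
    (1 / (T : ℝ)) * ∑ t,
      ((if bQ t (fun i => x ⟨i.val, i.isLt.trans t.isLt⟩) = x t then (0 : ℝ) else 1)
        - (if bP t (fun i => x ⟨i.val, i.isLt.trans t.isLt⟩) = x t then (0 : ℝ) else 1)) = 0 := by
  refine mul_eq_zero_of_right _ (Finset.sum_eq_zero fun t _ => ?_)
  rw [hbQ, hbP]
  split_ifs <;> simp_all

theorem avgRegret_zeroThenTwos (hbQ : ∀ t pfx, bQ t pfx = 1)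
    (hbP : ∀ (t : Fin T) (pfx : Fin t.val → Fin 3), bP t pfx =
      if h : t.val ≠ 0 then (if pfx ⟨0, Nat.pos_of_ne_zero h⟩ = 0 then 2 else 1) else 1)
    (h0 : 0 < T) :
    (1 / (T : ℝ)) * ∑ t,
      ((if bQ t (fun i => zeroThenTwos h0 ⟨i.val, i.isLt.trans t.isLt⟩) = zeroThenTwos h0 t
          then (0 : ℝ) else 1)
        - (if bP t (fun i => zeroThenTwos h0 ⟨i.val, i.isLt.trans t.isLt⟩) = zeroThenTwos h0 t
          then (0 : ℝ) else 1))
      = ((T : ℝ) - 1) / T := by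
  have hround : ∀ t : Fin T,
      ((if bQ t (fun i => zeroThenTwos h0 ⟨i.val, i.isLt.trans t.isLt⟩) = zeroThenTwos h0 t
          then (0 : ℝ) else 1)
        - (if bP t (fun i => zeroThenTwos h0 ⟨i.val, i.isLt.trans t.isLt⟩) = zeroThenTwos h0 t
          then (0 : ℝ) else 1))
      = if t = ⟨0, h0⟩ then 0 else 1 := by
    intro t
    rw [hbQ, hbP]
    by_cases ht : t = ⟨0, h0⟩
    · subst ht
      simp [zeroThenTwos]
    · have ht' : t.val ≠ 0 := fun h => ht (Fin.ext h)
      simp [zeroThenTwos, ht, ht']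
  rw [Finset.sum_congr rfl fun t _ => hround t, sum_ite_eq_zero_one, Fintype.card_fin]
  ring

end Regret

/-- Regret computation in the impossibility construction: the `Q`-optimal
learner always predicts `1`, the `P`-optimal comparator predicts `1` at `t = 1`
and, for `t ≥ 2`, predicts `2` if `Z_1 = 0` and `1` otherwise; consequently, on
the support of `P` the average per-round regret is `(T−1)/T` when `Z_1 = 0` and
`0` otherwise, and `P(Δ ≥ (T−1)/T) = φ`. -/
theorem stmt_17 (T : ℕ) (hT : 2 ≤ T) (φ ψ : ℝ)
    (hφ : φ ∈ Set.Ioo (0 : ℝ) (1 / 2)) (hψ : ψ ∈ Set.Ioo (0 : ℝ) (1 / 2 - φ))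
    (q : Fin 3 → ℝ)
    (hq : ∀ z, q z = if z = 0 then φ else if z = 1 then 1 - φ - ψ else ψ)
    (P : (Fin T → Fin 3) → ℝ)
    (hP : ∀ x, P x = if x ⟨0, by omega⟩ = 0 then
        (if ∀ t : Fin T, t ≠ ⟨0, by omega⟩ → x t = 2 then φ else 0)
      else ∏ t, q (x t))
    -- conditional kernels of `P` (as a function of the observed past)
    (κ : (t : Fin T) → (Fin t.val → Fin 3) → Fin 3 → ℝ)
    (hκ : ∀ (t : Fin T) (pfx : Fin t.val → Fin 3) (z : Fin 3),
      κ t pfx z = if h : t.val ≠ 0 then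
        (if pfx ⟨0, Nat.pos_of_ne_zero h⟩ = 0 then (if z = 2 then 1 else 0) else q z)
      else q z)
    -- `bQ` is Bayes optimal for `Q` (whose kernels are all `q`), `bP` for `P`
    (bQ bP : (t : Fin T) → (Fin t.val → Fin 3) → Fin 3)
    (hbQ : ∀ t pfx b', ∑ z, q z * (if bQ t pfx = z then (0 : ℝ) else 1) ≤
      ∑ z, q z * (if b' = z then (0 : ℝ) else 1))
    (hbP : ∀ t pfx b', ∑ z, κ t pfx z * (if bP t pfx = z then (0 : ℝ) else 1) ≤
      ∑ z, κ t pfx z * (if b' = z then (0 : ℝ) else 1))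
    (Δ : (Fin T → Fin 3) → ℝ)
    (hΔ : ∀ x, Δ x = (1 / (T : ℝ)) * ∑ t,
      ((if bQ t (fun i => x ⟨i.val, i.isLt.trans t.isLt⟩) = x t then (0 : ℝ) else 1)
        - (if bP t (fun i => x ⟨i.val, i.isLt.trans t.isLt⟩) = x t then (0 : ℝ) else 1))) :
    (∀ t pfx, bQ t pfx = 1) ∧
    (∀ (t : Fin T) (pfx : Fin t.val → Fin 3), bP t pfx =
      if h : t.val ≠ 0 then (if pfx ⟨0, Nat.pos_of_ne_zero h⟩ = 0 then 2 else 1) else 1) ∧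
    (∀ x, P x ≠ 0 →
      Δ x = if x ⟨0, by omega⟩ = 0 then ((T : ℝ) - 1) / T else 0) ∧
    ∑ x ∈ Finset.univ.filter (fun x : Fin T → Fin 3 => ((T : ℝ) - 1) / T ≤ Δ x), P x = φ := by
  have h0 : 0 < T := by omega
  have hmode := apply_lt_apply_one hφ hψ hq
  have HQ : ∀ t pfx, bQ t pfx = 1 := fun t pfx => IsBayesAct.eq_of_forall_lt (hbQ t pfx) hmode
  have HP := bayesAct_eq_of_kernel hmode hκ hbP
  have hsupp : ∀ x, P x ≠ 0 → x ⟨0, h0⟩ = 0 → x = zeroThenTwos h0 := by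
    intro x hPx hx
    rw [hP, if_pos hx] at hPx
    exact (eq_zeroThenTwos_iff h0 x).2 ⟨hx, by_contra fun htail => hPx (if_neg htail)⟩
  have HΔ : ∀ x, P x ≠ 0 → Δ x = if x ⟨0, h0⟩ = 0 then ((T : ℝ) - 1) / T else 0 := by
    intro x hPx
    split_ifs with hx
    · rw [hΔ, hsupp x hPx hx, avgRegret_zeroThenTwos HQ HP h0]
    · rw [hΔ, avgRegret_eq_zero_of_ne_zero HQ HP h0 hx]
  refine ⟨HQ, HP, HΔ, ?_⟩
  have hmass : P (zeroThenTwos h0) = φ := by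
    obtain ⟨hx, htail⟩ := (eq_zeroThenTwos_iff h0 _).1 rfl
    rw [hP, if_pos hx, if_pos htail]
  have hpos : (0 : ℝ) < ((T : ℝ) - 1) / T := by
    have : (2 : ℝ) ≤ T := by exact_mod_cast hT
    exact div_pos (by linarith) (by linarith)
  have hmem : zeroThenTwos h0 ∈ Finset.univ.filter (fun x => ((T : ℝ) - 1) / T ≤ Δ x) := by
    rw [Finset.mem_filter, HΔ _ (hmass ▸ hφ.1.ne'), if_pos ((eq_zeroThenTwos_iff h0 _).1 rfl).1]
    exact ⟨Finset.mem_univ _, le_rfl⟩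
  rw [Finset.sum_eq_single_of_mem _ hmem, hmass]
  intro x hx hne
  by_contra hPx
  rw [Finset.mem_filter, HΔ x hPx] at hx
  split_ifs at hx with hx0
  · exact hne (hsupp x hPx hx0)
  · linarith [hx.2]
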